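/- arXiv:1810.04996 — 2 statements merged into one kernel-verified Lean document; each statement's English description precedes it below -/
import Mathlib

section
/- For every α ∈ (0,1/2), the real number x = Φ̄⁻¹(α) (which is positive) satisfies log(1/α) + log(1/√(2π)) − 1 < x² < 2·log(1/α) + log(1/π). In particular Φ̄⁻¹(α) = Θ(√(log(1/α))). -/
/-!
Two elementary tail bounds for `Φ̄` give the two inequalities after taking logarithms at
`x = Φ̄⁻¹(α)`. Above: for `t ≥ x ≥ 0` one has `t² ≥ x² + (t - x)²`, so
`Φ̄(x) ≤ e^{-x²/2} Φ̄(0) = e^{-x²/2} / 2`; then `log 4 > log π` gives the strict upper bound.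
Below: on `[x, x + 1]` one has `t² ≤ 2x² + 2`, so `Φ̄(x) > e^{-(x² + 1)} / √(2π)`.
Since `Φ̄⁻¹` is `Function.invFun`, one first needs that `Φ̄` attains `α`: this is the intermediate
value theorem on `[0, √(2 log(1/α))]`. Positivity of `x` is then `Φ̄(x) = α < 1/2 = Φ̄(0)`.
-/

open MeasureTheory

/-- The standard normal survival function `Φ̄(x) = ∫_x^∞ (1/√(2π)) exp(-t²/2) dt`. -/
noncomputable def Phibar (x : ℝ) : ℝ :=
  ∫ t in Set.Ioi x, (Real.sqrt (2 * Real.pi))⁻¹ * Real.exp (-t ^ 2 / 2)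

/-- The inverse of the standard normal survival function on `(0,1)`. -/
noncomputable def PhibarInv : ℝ → ℝ := Function.invFun Phibar

open Real Set

noncomputable def normalDensity (t : ℝ) : ℝ := (√(2 * π))⁻¹ * exp (-t ^ 2 / 2)

lemma Phibar_eq_setIntegral_normalDensity (x : ℝ) :
    Phibar x = ∫ t in Ioi x, normalDensity t := rfl

lemma normalDensity_pos (t : ℝ) : 0 < normalDensity t := by
  unfold normalDensity; positivity

lemma continuous_normalDensity : Continuous normalDensity := by
  unfold normalDensity; fun_prop

lemma integrable_exp_neg_sq_div_two : Integrable fun t : ℝ => exp (-t ^ 2 / 2) := by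
  convert integrable_exp_neg_mul_sq (b := (1 : ℝ) / 2) (by norm_num) using 2 with t
  ring_nf

lemma integrable_normalDensity : Integrable normalDensity :=
  integrable_exp_neg_sq_div_two.const_mul _

lemma setIntegral_Ioi_exp_neg_sq_div_two (x : ℝ) :
    ∫ t in Ioi x, exp (-(t - x) ^ 2 / 2) = √(2 * π) / 2 := by
  have hshift := (measurePreserving_add_right volume x).setIntegral_preimage_emb
    (Homeomorph.addRight x).measurableEmbedding (fun t => exp (-(t - x) ^ 2 / 2)) (Ioi x)
  have hpre : (fun t : ℝ => t + x) ⁻¹' Ioi x = Ioi 0 := by ext t; simp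
  rw [hpre] at hshift
  have hgauss := integral_gaussian_Ioi (1 / 2)
  rw [show π / (1 / 2) = 2 * π by ring] at hgauss
  rw [← hshift, ← hgauss]
  congr 1 with t
  ring_nf

lemma Phibar_zero : Phibar 0 = 1 / 2 := by
  have h := setIntegral_Ioi_exp_neg_sq_div_two 0
  simp only [sub_zero] at h
  rw [Phibar, integral_const_mul, h]
  field_simp

lemma Phibar_eq_integral_Ioc_add {a b : ℝ} (h : a ≤ b) :
    Phibar a = (∫ t in Ioc a b, normalDensity t) + Phibar b := by
  rw [Phibar_eq_setIntegral_normalDensity, Phibar_eq_setIntegral_normalDensity,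
    ← Ioc_union_Ioi_eq_Ioi h, setIntegral_union (Ioc_disjoint_Ioi le_rfl) measurableSet_Ioi
      integrable_normalDensity.integrableOn integrable_normalDensity.integrableOn]

lemma Phibar_nonneg (x : ℝ) : 0 ≤ Phibar x :=
  setIntegral_nonneg measurableSet_Ioi fun t _ => (normalDensity_pos t).le

lemma Phibar_strictAnti : StrictAnti Phibar := by
  intro a b hab
  have hpos : 0 < ∫ t in Ioc a b, normalDensity t := by
    rw [← intervalIntegral.integral_of_le hab.le]
    exact intervalIntegral.integral_pos hab continuous_normalDensity.continuousOn
      (fun t _ => (normalDensity_pos t).le) ⟨a, left_mem_Icc.2 hab.le, normalDensity_pos a⟩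
  linarith [Phibar_eq_integral_Ioc_add hab.le]

lemma Phibar_pos (x : ℝ) : 0 < Phibar x :=
  (Phibar_nonneg (x + 1)).trans_lt (Phibar_strictAnti (lt_add_one x))

lemma continuous_Phibar : Continuous Phibar := by
  have h : Phibar = fun x => Phibar 0 - ∫ t in (0 : ℝ)..x, normalDensity t := by
    funext x
    rcases le_total 0 x with hx | hx
    · rw [intervalIntegral.integral_of_le hx, Phibar_eq_integral_Ioc_add hx]
      ring
    · rw [intervalIntegral.integral_symm, intervalIntegral.integral_of_le hx,
        Phibar_eq_integral_Ioc_add hx]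
      ring
  rw [h]
  exact continuous_const.sub (integrable_normalDensity.continuous_primitive 0)

lemma Phibar_le_exp {x : ℝ} (hx : 0 ≤ x) : Phibar x ≤ exp (-x ^ 2 / 2) / 2 := by
  have hint : Integrable fun t : ℝ => exp (-(t - x) ^ 2 / 2) := by
    simpa using integrable_exp_neg_sq_div_two.comp_sub_right x
  calc Phibar x
      ≤ ∫ t in Ioi x, (√(2 * π))⁻¹ * (exp (-x ^ 2 / 2) * exp (-(t - x) ^ 2 / 2)) := by
        refine setIntegral_mono_on integrable_normalDensity.integrableOn
          ((hint.const_mul _).const_mul _).integrableOn measurableSet_Ioi fun t ht => ?_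
        have hxt : x ≤ t := le_of_lt ht
        rw [← exp_add]
        gcongr
        nlinarith
    _ = exp (-x ^ 2 / 2) / 2 := by
        rw [integral_const_mul, integral_const_mul, setIntegral_Ioi_exp_neg_sq_div_two]
        field_simp

lemma exp_lt_Phibar (x : ℝ) : (√(2 * π))⁻¹ * exp (-(x ^ 2 + 1)) < Phibar x := by
  set c := (√(2 * π))⁻¹ * exp (-(x ^ 2 + 1))
  have hbound : ∀ t ∈ Icc x (x + 1), c ≤ normalDensity t := fun t ⟨hxt, htx⟩ => by
    unfold c normalDensity
    gcongr
    nlinarith [sq_nonneg (x - (t - x))]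
  have hmass : c ≤ ∫ t in Ioc x (x + 1), normalDensity t := by
    rw [← intervalIntegral.integral_of_le (by linarith)]
    simpa using intervalIntegral.integral_mono_on (by linarith)
      (intervalIntegrable_const (μ := volume)) (continuous_normalDensity.intervalIntegrable _ _)
      hbound
  linarith [Phibar_eq_integral_Ioc_add (show x ≤ x + 1 by linarith), Phibar_pos (x + 1)]

lemma sq_lt_two_mul_log_inv_Phibar {x : ℝ} (hx : 0 ≤ x) :
    x ^ 2 < 2 * log (1 / Phibar x) + log (1 / π) := by
  have hlog := log_le_log (Phibar_pos x) (Phibar_le_exp hx)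
  rw [log_div (exp_pos _).ne' two_ne_zero, log_exp] at hlog
  have hpi : log π < 2 * log 2 := by
    rw [← log_rpow two_pos]
    exact log_lt_log pi_pos (by norm_num; linarith [pi_lt_d2])
  rw [one_div, one_div, log_inv, log_inv]
  linarith

lemma log_inv_Phibar_lt_sq (x : ℝ) :
    log (1 / Phibar x) + log (1 / √(2 * π)) - 1 < x ^ 2 := by
  have hlog := log_lt_log (by positivity) (exp_lt_Phibar x)
  rw [log_mul (by positivity) (exp_pos _).ne', log_exp, log_inv] at hlog
  rw [one_div, one_div, log_inv, log_inv]
  linarith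

lemma exists_Phibar_eq {α : ℝ} (h0 : 0 < α) (h2 : α ≤ 1 / 2) : ∃ x, Phibar x = α := by
  have hlog : 0 ≤ log (1 / α) := log_nonneg (by rw [le_div_iff₀ h0]; linarith)
  set b := √(2 * log (1 / α))
  have hb : exp (-b ^ 2 / 2) = α := by
    rw [sq_sqrt (by linarith), show -(2 * log (1 / α)) / 2 = log α by
      rw [one_div, log_inv]; ring, exp_log h0]
  have hmem : α ∈ Icc (Phibar b) (Phibar 0) :=
    ⟨by linarith [Phibar_le_exp (sqrt_nonneg (2 * log (1 / α)))], Phibar_zero ▸ h2⟩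
  obtain ⟨x, -, hx⟩ := intermediate_value_Icc' (sqrt_nonneg _) continuous_Phibar.continuousOn hmem
  exact ⟨x, hx⟩

/-- For `α ∈ (0, 1/2)`, the number `x = Φ̄⁻¹(α)` is positive and satisfies
`log(1/α) + log(1/√(2π)) - 1 < x² < 2 log(1/α) + log(1/π)`. -/
theorem stmt7 (α : ℝ) (hα : α ∈ Set.Ioo (0 : ℝ) (1 / 2)) :
    0 < PhibarInv α ∧
    Real.log (1 / α) + Real.log (1 / Real.sqrt (2 * Real.pi)) - 1 < (PhibarInv α) ^ 2 ∧
    (PhibarInv α) ^ 2 < 2 * Real.log (1 / α) + Real.log (1 / Real.pi) := by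
  obtain ⟨hα0, hα2⟩ := hα
  have hz : Phibar (PhibarInv α) = α :=
    Function.invFun_eq (exists_Phibar_eq hα0 hα2.le)
  have hzpos : 0 < PhibarInv α := by
    rw [← Phibar_strictAnti.lt_iff_gt, hz, Phibar_zero]
    exact hα2
  refine ⟨hzpos, ?_, ?_⟩
  · simpa only [hz] using log_inv_Phibar_lt_sq (PhibarInv α)
  · simpa only [hz] using sq_lt_two_mul_log_inv_Phibar hzpos.le
end

section
/- Fix δ ∈ (0,1) and integers 1 ≤ N_P ≤ N_A. Let X_1, …, X_{N_A} be independent standard Gaussians and X_{(1)} ≥ … ≥ X_{(N_A)} their decreasing order statistics. Then with probability at least 1 − δ, for every i ∈ {1,…,N_P} one has X_{(i)} ≤ √( 2·log( (e·N_A/i)·(N_P/δ)^{1/i} ) ). -/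
/-! If `X_{(i)} > t`, then at least `i` of the `X_j` are `≥ t`. By independence and the Gaussian
tail bound `P(X ≥ t) ≤ exp(-t²/2)`, a union bound over the `i`-element subsets bounds the
probability of this by `C(N_A, i) exp(-i t²/2) ≤ (e N_A / i)^i exp(-i t²/2)`, and the threshold
`t_i` of the statement is chosen so that this is at most `δ / N_P`. A union bound over
`i ≤ N_P` finishes the proof. -/

open MeasureTheory ProbabilityTheory

/-- The `i`-th largest entry (0-indexed: `i = 0` is the largest) of the tuple `v`. -/
noncomputable def orderStatDesc {n : ℕ} (v : Fin n → ℝ) (i : Fin n) : ℝ :=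
  v (Tuple.sort v i.rev)

open Finset Real
open scoped ENNReal NNReal

lemma succ_le_card_filter_of_le_orderStatDesc {n : ℕ} {v : Fin n → ℝ} {i : Fin n} {t : ℝ}
    (h : t ≤ orderStatDesc v i) : (i : ℕ) + 1 ≤ #{j | t ≤ v j} := by
  have hsub : (Ici i.rev).image (Tuple.sort v) ⊆ ({j | t ≤ v j} : Finset _) := by
    simp only [subset_iff, mem_image, mem_Ici, mem_filter_univ]
    rintro _ ⟨k, hk, rfl⟩
    exact h.trans (Tuple.monotone_sort v hk)
  have := card_le_card hsub
  rw [card_image_of_injective _ (Tuple.sort v).injective, Fin.card_Ici, Fin.val_rev] at this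
  omega

lemma Nat.choose_le_exp_one_mul_div_pow (n k : ℕ) : (n.choose k : ℝ) ≤ (exp 1 * n / k) ^ k := by
  rcases k.eq_zero_or_pos with rfl | hk
  · simp
  have hkk : (k : ℝ) ^ k / k.factorial ≤ exp 1 ^ k := by
    rw [← exp_nat_mul, mul_one]
    exact pow_div_factorial_le_exp _ k.cast_nonneg k
  calc (n.choose k : ℝ) ≤ (n : ℝ) ^ k / k.factorial := Nat.choose_le_pow_div k n
    _ = (n / k : ℝ) ^ k * ((k : ℝ) ^ k / k.factorial) := by
        rw [div_pow]; field_simp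
    _ ≤ (n / k : ℝ) ^ k * exp 1 ^ k := by gcongr
    _ = (exp 1 * n / k) ^ k := by rw [← mul_pow]; ring

lemma Real.exp_neg_sq_sqrt_two_mul_log_div_two_le_inv {A : ℝ} (hA : 0 < A) :
    exp (-√(2 * log A) ^ 2 / 2) ≤ A⁻¹ := by
  rcases le_or_gt 1 A with h1 | h1
  · rw [sq_sqrt (by linarith [log_nonneg h1]), neg_div, mul_div_cancel_left₀ _ two_ne_zero,
      exp_neg, exp_log hA]
  · rw [sqrt_eq_zero_of_nonpos (by linarith [log_neg hA h1])]
    simpa using (one_le_inv₀ hA).mpr h1.le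

noncomputable def gaussianOrderThreshold (n k : ℕ) (c : ℝ) : ℝ :=
  √(2 * log (exp 1 * n / k * c ^ (1 / k : ℝ)))

lemma choose_mul_exp_neg_sq_gaussianOrderThreshold_le {n k : ℕ} (hk : k ≠ 0) {c : ℝ}
    (hc : 0 < c) :
    (n.choose k : ℝ) * exp (-gaussianOrderThreshold n k c ^ 2 / 2) ^ k ≤ c⁻¹ := by
  rcases n.eq_zero_or_pos with rfl | hn
  · simp [Nat.choose_eq_zero_of_lt (Nat.pos_of_ne_zero hk), hc.le]
  set B := exp 1 * n / k
  have hB : 0 < B := by positivity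
  have hck : (c ^ (1 / k : ℝ)) ^ k = c := by rw [one_div, rpow_inv_natCast_pow hc.le hk]
  calc (n.choose k : ℝ) * exp (-gaussianOrderThreshold n k c ^ 2 / 2) ^ k
      ≤ B ^ k * (B * c ^ (1 / k : ℝ))⁻¹ ^ k := by
        gcongr
        · exact Nat.choose_le_exp_one_mul_div_pow n k
        · exact exp_neg_sq_sqrt_two_mul_log_div_two_le_inv (by positivity)
    _ = c⁻¹ := by
        rw [inv_pow, mul_pow, hck]
        field_simp

lemma hasSubgaussianMGF_of_map_eq_gaussianReal {Ω : Type*} [MeasurableSpace Ω] {μ : Measure Ω}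
    [IsProbabilityMeasure μ] {X : Ω → ℝ} {v : ℝ≥0} (hX : μ.map X = gaussianReal 0 v) :
    HasSubgaussianMGF X v μ where
  integrable_exp_mul t := mgf_pos_iff.mp (by rw [mgf_gaussianReal hX]; positivity)
  mgf_le t := by rw [mgf_gaussianReal hX, zero_mul, zero_add]

lemma ProbabilityTheory.iIndepFun.measure_le_card_filter_mem_le {Ω ι β : Type*}
    [MeasurableSpace Ω] [MeasurableSpace β] [Fintype ι] {μ : Measure Ω} {X : ι → Ω → β}
    (hX : iIndepFun X μ) {s : Set β} [DecidablePred (· ∈ s)] (hs : MeasurableSet s)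
    {p : ℝ≥0∞} (hp : ∀ j, μ (X j ⁻¹' s) ≤ p) (k : ℕ) :
    μ {ω | k ≤ #{j | X j ω ∈ s}} ≤ (Fintype.card ι).choose k * p ^ k := by
  have hsub : {ω | k ≤ #{j | X j ω ∈ s}} ⊆ ⋃ S ∈ powersetCard k univ, ⋂ j ∈ S, X j ⁻¹' s := by
    intro ω hω
    obtain ⟨S, hS, hcard⟩ := exists_subset_card_eq hω
    simp only [Set.mem_iUnion, Set.mem_iInter, mem_powersetCard]
    exact ⟨S, ⟨subset_univ S, hcard⟩, fun j hj => (mem_filter_univ j).mp (hS hj)⟩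
  calc μ {ω | k ≤ #{j | X j ω ∈ s}}
      ≤ ∑ S ∈ powersetCard k univ, μ (⋂ j ∈ S, X j ⁻¹' s) :=
        (measure_mono hsub).trans (measure_biUnion_finset_le _ _)
    _ = ∑ S ∈ powersetCard k (univ : Finset ι), ∏ j ∈ S, μ (X j ⁻¹' s) :=
        sum_congr rfl fun S _ => hX.meas_biInter fun j _ => ⟨s, hs, rfl⟩
    _ ≤ ∑ S ∈ powersetCard k (univ : Finset ι), p ^ k := by
        refine sum_le_sum fun S hS => ?_
        rw [← (mem_powersetCard.mp hS).2, ← prod_const]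
        exact prod_le_prod' fun j _ => hp j
    _ = (Fintype.card ι).choose k * p ^ k := by
        rw [sum_const, card_powersetCard, card_univ, nsmul_eq_mul]

lemma measure_le_card_filter_gaussianOrderThreshold_le {Ω : Type*} [MeasurableSpace Ω]
    {μ : Measure Ω} [IsProbabilityMeasure μ] {n : ℕ} {X : Fin n → Ω → ℝ} (hX : iIndepFun X μ)
    (hdist : ∀ j, μ.map (X j) = gaussianReal 0 1) {k : ℕ} (hk : k ≠ 0) {c : ℝ} (hc : 0 < c) :
    μ {ω | k ≤ #{j | gaussianOrderThreshold n k c ≤ X j ω}} ≤ ENNReal.ofReal c⁻¹ := by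
  set t := gaussianOrderThreshold n k c
  have htail (j : Fin n) : μ (X j ⁻¹' Set.Ici t) ≤ ENNReal.ofReal (exp (-t ^ 2 / 2)) := by
    rw [← ofReal_measureReal]
    refine ENNReal.ofReal_le_ofReal <|
      ((hasSubgaussianMGF_of_map_eq_gaussianReal (hdist j)).measure_ge_le
        (ε := t) (sqrt_nonneg _)).trans_eq ?_
    rw [NNReal.coe_one, mul_one]
  calc μ {ω | k ≤ #{j | t ≤ X j ω}} ≤ n.choose k * ENNReal.ofReal (exp (-t ^ 2 / 2)) ^ k := by
        simpa using hX.measure_le_card_filter_mem_le measurableSet_Ici htail k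
    _ ≤ ENNReal.ofReal c⁻¹ := by
        rw [← ENNReal.ofReal_pow (exp_nonneg _), ← ENNReal.ofReal_natCast,
          ← ENNReal.ofReal_mul (by positivity)]
        exact ENNReal.ofReal_le_ofReal (choose_mul_exp_neg_sq_gaussianOrderThreshold_le hk hc)

lemma ofReal_one_sub_le_measure_of_measure_compl_le {Ω : Type*} [MeasurableSpace Ω]
    {μ : Measure Ω} [IsProbabilityMeasure μ] {s : Set Ω} {δ : ℝ} (hδ : 0 ≤ δ)
    (h : μ sᶜ ≤ ENNReal.ofReal δ) : ENNReal.ofReal (1 - δ) ≤ μ s := by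
  have hcover : 1 ≤ μ s + μ sᶜ := by
    simpa [Set.union_compl_self, measure_univ] using measure_union_le (μ := μ) s sᶜ
  rw [ENNReal.ofReal_sub _ hδ, ENNReal.ofReal_one, tsub_le_iff_right]
  exact hcover.trans (add_le_add_right h _)

theorem stmt13_general {Ω : Type*} [MeasureSpace Ω] [IsProbabilityMeasure (ℙ : Measure Ω)]
    (δ : ℝ) (hδ : δ ∈ Set.Ioo (0 : ℝ) 1)
    (NP NA : ℕ)
    (X : Fin NA → Ω → ℝ)
    (hindep : iIndepFun X ℙ)
    (hdist : ∀ i, Measure.map (X i) ℙ = gaussianReal 0 1) :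
    ENNReal.ofReal (1 - δ) ≤
      ℙ {ω | ∀ i : Fin NA, (i : ℕ) < NP →
        orderStatDesc (fun k => X k ω) i ≤
          Real.sqrt (2 * Real.log ((Real.exp 1 * NA / ((i : ℕ) + 1)) *
            ((NP : ℝ) / δ) ^ (1 / ((i : ℕ) + 1 : ℝ))))} := by
  set Bad : ℕ → Set Ω := fun k =>
    {ω | k + 1 ≤ #{j | gaussianOrderThreshold NA (k + 1) (NP / δ) ≤ X j ω}}
  have hBad (k : ℕ) (hk : k ∈ range NP) : ℙ (Bad k) ≤ ENNReal.ofReal (δ / NP) := by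
    have hNP : (0 : ℝ) < NP := by exact_mod_cast (mem_range.mp hk).trans_le' k.zero_le
    simpa only [inv_div] using measure_le_card_filter_gaussianOrderThreshold_le hindep hdist
      k.succ_ne_zero (div_pos hNP hδ.1)
  refine ofReal_one_sub_le_measure_of_measure_compl_le hδ.1.le ?_
  calc _ ≤ ℙ (⋃ k ∈ range NP, Bad k) := by
        refine measure_mono fun ω hω => ?_
        simp only [Set.mem_compl_iff, Set.mem_ofPred_eq, not_forall, not_le] at hω
        obtain ⟨i, hi, hlt⟩ := hω
        refine Set.mem_biUnion (mem_range.mpr hi) (succ_le_card_filter_of_le_orderStatDesc ?_)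
        simpa [gaussianOrderThreshold] using hlt.le
    _ ≤ ∑ k ∈ range NP, ENNReal.ofReal (δ / NP) :=
        (measure_biUnion_finset_le _ _).trans (sum_le_sum hBad)
    _ ≤ ENNReal.ofReal δ := by
        rw [sum_const, card_range, nsmul_eq_mul, ← ENNReal.ofReal_natCast,
          ← ENNReal.ofReal_mul (Nat.cast_nonneg _)]
        refine ENNReal.ofReal_le_ofReal ?_
        rcases eq_or_ne (NP : ℝ) 0 with h | h <;> simp [h, hδ.1.le, mul_div_cancel₀]

/-- With probability at least `1 - δ`, every one of the `N_P` largest of `N_A` i.i.d.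
standard Gaussians satisfies `X_{(i)} ≤ √(2 log((e N_A/i) (N_P/δ)^{1/i}))`. -/
theorem stmt13 {Ω : Type*} [MeasureSpace Ω] [IsProbabilityMeasure (ℙ : Measure Ω)]
    (δ : ℝ) (hδ : δ ∈ Set.Ioo (0 : ℝ) 1)
    (NP NA : ℕ) (hNP : 1 ≤ NP) (hle : NP ≤ NA)
    (X : Fin NA → Ω → ℝ) (hmeas : ∀ i, Measurable (X i))
    (hindep : iIndepFun X ℙ)
    (hdist : ∀ i, Measure.map (X i) ℙ = gaussianReal 0 1) :
    ENNReal.ofReal (1 - δ) ≤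
      ℙ {ω | ∀ i : Fin NA, (i : ℕ) < NP →
        orderStatDesc (fun k => X k ω) i ≤
          Real.sqrt (2 * Real.log ((Real.exp 1 * NA / ((i : ℕ) + 1)) *
            ((NP : ℝ) / δ) ^ (1 / ((i : ℕ) + 1 : ℝ))))} :=
  stmt13_general δ hδ NP NA X hindep hdist
end
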